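/- Let (a,b,c) : [0,∞) → ℝ³ be a differentiable curve with a(t) > 0, c(t) > 0 and a(t)² + b(t)² + c(t)² = 4 for all t ≥ 0, which solves the norm-preserving normalised gauged bracket Bach flow: (a,b,c)'(t) = F(a(t),b(t),c(t)) − (1/4)·⟨F(a(t),b(t),c(t)), (a(t),b(t),c(t))⟩·(a(t),b(t),c(t)), where ⟨·,·⟩ is the Euclidean inner product on ℝ³. Then (a(t), b(t), c(t)) converges to (√2, 0, √2) as t → ∞. -/

import Mathlib

/-- First component of the right-hand side `F` of the gauged bracket Bach flow. -/
noncomputable def Fa (a b c : ℝ) : ℝ :=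
  -(a / 48) * (44*a^4 + 72*a^2*b^2 - 5*a^2*c^2 + 28*b^4 + 24*b^2*c^2 - 4*c^4)

/-- Second component of the right-hand side `F` of the gauged bracket Bach flow. -/
noncomputable def Fb (a b c : ℝ) : ℝ :=
  -(b / 48) * (60*a^4 + 104*a^2*b^2 + 57*a^2*c^2 + 44*b^4 + 104*b^2*c^2 + 60*c^4)

/-- Third component of the right-hand side `F` of the gauged bracket Bach flow. -/
noncomputable def Fc (a b c : ℝ) : ℝ :=
  -(c / 48) * (-4*a^4 + 24*a^2*b^2 - 5*a^2*c^2 + 28*b^4 + 72*b^2*c^2 + 44*c^4)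

/-- `(a,b,c) : ℝ → ℝ³` is a differentiable solution of the gauged bracket Bach
flow on the set `S ⊆ ℝ`. -/
def IsBachFlowSolution (a b c : ℝ → ℝ) (S : Set ℝ) : Prop :=
  ∀ t ∈ S,
    HasDerivAt a (Fa (a t) (b t) (c t)) t ∧
    HasDerivAt b (Fb (a t) (b t) (c t)) t ∧
    HasDerivAt c (Fc (a t) (b t) (c t)) t

/-!
In the squared coordinates `x = a²`, `y = b²`, `z = c²` the normalised flow stays on the simplex
`x + y + z = 4` and reads `x' = x ρ_a`, `y' = y ρ_b`, `z' = z ρ_c` with polynomial rates. On the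
simplex `ρ_b ≤ -(x + z)³ / 6`, so `y` decreases and then decays exponentially; `ρ_a + ρ_c ≥ 0`, so
`x z` never drops below its positive initial value `w₀`; and
`(x - z)' = (x - z)(8y/3 - 4xz - 3xyz/16)`, so once `y` is small `(x - z)²` decays at rate `4 w₀`.
Hence `(x, y, z) → (2, 0, 2)`.
-/

open Filter Topology Set Real

/-- `Fa a b c = -(a/48) * Pa (a^2) (b^2) (c^2)`, and likewise for `Pb` and `Pc`; in the squared
coordinates `x = a^2`, `y = b^2`, `z = c^2` one has `⟨F(a,b,c), (a,b,c)⟩ = -bachPairing x y z / 48`. -/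
def Pa (x y z : ℝ) : ℝ := 44*x^2 + 72*x*y - 5*x*z + 28*y^2 + 24*y*z - 4*z^2

def Pb (x y z : ℝ) : ℝ := 60*x^2 + 104*x*y + 57*x*z + 44*y^2 + 104*y*z + 60*z^2

def Pc (x y z : ℝ) : ℝ := -4*x^2 + 24*x*y - 5*x*z + 28*y^2 + 72*y*z + 44*z^2

def bachPairing (x y z : ℝ) : ℝ := x * Pa x y z + y * Pb x y z + z * Pc x y z

noncomputable def rateA (x y z : ℝ) : ℝ := (bachPairing x y z - 4 * Pa x y z) / 96

noncomputable def rateB (x y z : ℝ) : ℝ := (bachPairing x y z - 4 * Pb x y z) / 96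

noncomputable def rateC (x y z : ℝ) : ℝ := (bachPairing x y z - 4 * Pc x y z) / 96

lemma two_mul_normalisedFa (A B C : ℝ) :
    2 * A * (Fa A B C - (1/4) * (Fa A B C * A + Fb A B C * B + Fc A B C * C) * A) =
      A ^ 2 * rateA (A ^ 2) (B ^ 2) (C ^ 2) := by
  simp only [Fa, Fb, Fc, rateA, bachPairing, Pa, Pb, Pc]; ring

lemma two_mul_normalisedFb (A B C : ℝ) :
    2 * B * (Fb A B C - (1/4) * (Fa A B C * A + Fb A B C * B + Fc A B C * C) * B) =
      B ^ 2 * rateB (A ^ 2) (B ^ 2) (C ^ 2) := by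
  simp only [Fa, Fb, Fc, rateB, bachPairing, Pa, Pb, Pc]; ring

lemma two_mul_normalisedFc (A B C : ℝ) :
    2 * C * (Fc A B C - (1/4) * (Fa A B C * A + Fb A B C * B + Fc A B C * C) * C) =
      C ^ 2 * rateC (A ^ 2) (B ^ 2) (C ^ 2) := by
  simp only [Fa, Fb, Fc, rateC, bachPairing, Pa, Pb, Pc]; ring

section Simplex

variable {x y z : ℝ}

lemma rateB_le (hx : 0 ≤ x) (hy : 0 ≤ y) (hz : 0 ≤ z) (hs : x + y + z = 4) :
    rateB x y z ≤ -(x + z) ^ 3 / 6 := by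
  have hrem : 0 ≤ 78*x*z*(x + z) + 32*y*(x^2 + z^2) + 16*y^2*(x + z) + 160*x*y*z := by positivity
  rw [rateB, ← hs]
  simp only [bachPairing, Pa, Pb, Pc]
  linear_combination hrem / 96

lemma rateA_add_rateC_nonneg (hx : 0 ≤ x) (hy : 0 ≤ y) (hz : 0 ≤ z) (hs : x + y + z = 4) :
    0 ≤ rateA x y z + rateC x y z := by
  have hrem : 0 ≤ y * (80*x^2 + 112*x*y + 124*x*z + 32*y^2 + 112*y*z + 80*z^2)
      + 48 * (x + y + z) * (x - z)^2 := by positivity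
  rw [rateA, rateC, ← hs]
  simp only [bachPairing, Pa, Pb, Pc]
  linear_combination hrem / 96

lemma mul_rateA_sub_mul_rateC (hs : x + y + z = 4) :
    x * rateA x y z - z * rateC x y z = (x - z) * (8 * y / 3 - 4 * x * z - 3 * x * y * z / 16) := by
  obtain rfl : y = 4 - x - z := by linarith
  simp only [rateA, rateC, bachPairing, Pa, Pb, Pc]
  ring

end Simplex

lemma antitoneOn_Ici_of_hasDerivAt_nonpos {f f' : ℝ → ℝ} {T : ℝ}
    (hf : ∀ t ≥ T, HasDerivAt f (f' t) t) (hf' : ∀ t ≥ T, f' t ≤ 0) : AntitoneOn f (Ici T) := by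
  refine antitoneOn_of_hasDerivWithinAt_nonpos (f' := f') (convex_Ici T)
    (fun t ht => (hf t ht).continuousAt.continuousWithinAt) (fun t ht => ?_) (fun t ht => ?_)
  all_goals rw [interior_Ici] at ht
  exacts [(hf t (le_of_lt ht)).hasDerivWithinAt, hf' t (le_of_lt ht)]

lemma monotoneOn_Ici_of_hasDerivAt_nonneg {f f' : ℝ → ℝ} {T : ℝ}
    (hf : ∀ t ≥ T, HasDerivAt f (f' t) t) (hf' : ∀ t ≥ T, 0 ≤ f' t) : MonotoneOn f (Ici T) := by
  refine monotoneOn_of_hasDerivWithinAt_nonneg (f' := f') (convex_Ici T)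
    (fun t ht => (hf t ht).continuousAt.continuousWithinAt) (fun t ht => ?_) (fun t ht => ?_)
  all_goals rw [interior_Ici] at ht
  exacts [(hf t (le_of_lt ht)).hasDerivWithinAt, hf' t (le_of_lt ht)]

lemma tendsto_zero_of_hasDerivAt_le_neg_mul {f f' : ℝ → ℝ} {k T : ℝ} (hk : 0 < k)
    (hf : ∀ t ≥ T, HasDerivAt f (f' t) t) (hf' : ∀ t ≥ T, f' t ≤ -k * f t)
    (hf₀ : ∀ t ≥ T, 0 ≤ f t) : Tendsto f atTop (𝓝 0) := by
  have hexp : ∀ t, HasDerivAt (fun s => exp (k * s)) (exp (k * t) * k) t := fun t => by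
    simpa using ((hasDerivAt_id t).const_mul k).exp
  have hanti : AntitoneOn (fun t => f t * exp (k * t)) (Ici T) :=
    antitoneOn_Ici_of_hasDerivAt_nonpos (fun t ht => (hf t ht).mul (hexp t)) fun t ht => by
      nlinarith [hf' t ht, exp_pos (k * t)]
  have hbound : ∀ t ≥ T, f t ≤ f T * exp (k * T) * exp (-(k * t)) := fun t ht => by
    have h := hanti self_mem_Ici ht ht
    rw [exp_neg, ← div_eq_mul_inv, le_div_iff₀ (exp_pos _)]
    exact h
  have hlim : Tendsto (fun t => f T * exp (k * T) * exp (-(k * t))) atTop (𝓝 0) := by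
    simpa using (tendsto_exp_neg_atTop_nhds_zero.comp (tendsto_id.const_mul_atTop hk)).const_mul
      (f T * exp (k * T))
  exact squeeze_zero' ((eventually_ge_atTop T).mono hf₀) ((eventually_ge_atTop T).mono hbound) hlim

lemma tendsto_sqrt_of_tendsto_sq {α : Type*} {l : Filter α} {f : α → ℝ} {r : ℝ}
    (hf : ∀ᶠ t in l, 0 ≤ f t) (h : Tendsto (fun t => f t ^ 2) l (𝓝 r)) :
    Tendsto f l (𝓝 (√r)) :=
  ((continuous_sqrt.tendsto r).comp h).congr' (hf.mono fun _ ht => sqrt_sq ht)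

lemma tendsto_zero_of_tendsto_sq {α : Type*} {l : Filter α} {f : α → ℝ}
    (h : Tendsto (fun t => f t ^ 2) l (𝓝 0)) : Tendsto f l (𝓝 0) := by
  rw [tendsto_zero_iff_abs_tendsto_zero, ← sqrt_zero]
  exact tendsto_sqrt_of_tendsto_sq (Eventually.of_forall fun t => abs_nonneg (f t))
    (by simpa only [Function.comp_apply, sq_abs] using h)

lemma HasDerivAt.sq_of_two_mul_eq {f : ℝ → ℝ} {f' r t : ℝ} (hf : HasDerivAt f f' t)
    (hr : 2 * f t * f' = r) : HasDerivAt (fun s => f s ^ 2) r t :=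
  (hf.pow 2).congr_deriv (by rw [← hr]; push_cast; ring)

structure IsSquaredNormalisedFlow (x y z : ℝ → ℝ) : Prop where
  nonneg_x : ∀ t, 0 ≤ x t
  nonneg_y : ∀ t, 0 ≤ y t
  nonneg_z : ∀ t, 0 ≤ z t
  sum_eq : ∀ t ≥ 0, x t + y t + z t = 4
  hasDerivAt_x : ∀ t ≥ 0, HasDerivAt x (x t * rateA (x t) (y t) (z t)) t
  hasDerivAt_y : ∀ t ≥ 0, HasDerivAt y (y t * rateB (x t) (y t) (z t)) t
  hasDerivAt_z : ∀ t ≥ 0, HasDerivAt z (z t * rateC (x t) (y t) (z t)) t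

namespace IsSquaredNormalisedFlow

variable {x y z : ℝ → ℝ}

lemma rateB_le (h : IsSquaredNormalisedFlow x y z) {t : ℝ} (ht : 0 ≤ t) :
    rateB (x t) (y t) (z t) ≤ -(x t + z t) ^ 3 / 6 :=
  _root_.rateB_le (h.nonneg_x t) (h.nonneg_y t) (h.nonneg_z t) (h.sum_eq t ht)

lemma antitoneOn_y (h : IsSquaredNormalisedFlow x y z) : AntitoneOn y (Ici 0) :=
  antitoneOn_Ici_of_hasDerivAt_nonpos h.hasDerivAt_y fun t ht =>
    mul_nonpos_of_nonneg_of_nonpos (h.nonneg_y t) <| (h.rateB_le ht).trans <| by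
      linarith [pow_nonneg (add_nonneg (h.nonneg_x t) (h.nonneg_z t)) 3]

/-- `y` decays exponentially: `y` is antitone, so `x + z = 4 - y` stays above `4 - y 0 > 0`. -/
lemma tendsto_y (h : IsSquaredNormalisedFlow x y z) (hx₀ : 0 < x 0) : Tendsto y atTop (𝓝 0) := by
  have hy₀ : 0 < 4 - y 0 := by linarith [h.sum_eq 0 le_rfl, h.nonneg_z 0]
  refine tendsto_zero_of_hasDerivAt_le_neg_mul (k := (4 - y 0) ^ 3 / 6) (by positivity)
    h.hasDerivAt_y (fun t ht => ?_) fun t _ => h.nonneg_y t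
  have hxz : 4 - y 0 ≤ x t + z t := by
    linarith [h.sum_eq t ht, h.antitoneOn_y self_mem_Ici ht ht]
  have hcube := pow_le_pow_left₀ hy₀.le hxz 3
  calc y t * rateB (x t) (y t) (z t) ≤ y t * (-(x t + z t) ^ 3 / 6) :=
        mul_le_mul_of_nonneg_left (h.rateB_le ht) (h.nonneg_y t)
    _ ≤ -((4 - y 0) ^ 3 / 6) * y t := by nlinarith [h.nonneg_y t]

lemma monotoneOn_mul (h : IsSquaredNormalisedFlow x y z) :
    MonotoneOn (fun t => x t * z t) (Ici 0) :=
  monotoneOn_Ici_of_hasDerivAt_nonneg (fun t ht => (h.hasDerivAt_x t ht).mul (h.hasDerivAt_z t ht))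
    fun t ht => by
      have hrate :=
        rateA_add_rateC_nonneg (h.nonneg_x t) (h.nonneg_y t) (h.nonneg_z t) (h.sum_eq t ht)
      nlinarith [mul_nonneg (mul_nonneg (h.nonneg_x t) (h.nonneg_z t)) hrate]

/-- Once `y < 3 w₀ / 4`, where `w₀ = x 0 * z 0 ≤ x * z`, the growth rate of `(x - z)^2` is at most
`-4 w₀`. -/
lemma tendsto_sub_sq (h : IsSquaredNormalisedFlow x y z) (hxz₀ : 0 < x 0 * z 0) :
    Tendsto (fun t => (x t - z t) ^ 2) atTop (𝓝 0) := by
  have hx₀ : 0 < x 0 := pos_of_mul_pos_left hxz₀ (h.nonneg_z 0)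
  obtain ⟨T, hT⟩ := eventually_atTop.1 <|
    ((h.tendsto_y hx₀).eventually_lt_const (by positivity : (0:ℝ) < 3 * (x 0 * z 0) / 4)).and
      (eventually_ge_atTop 0)
  refine tendsto_zero_of_hasDerivAt_le_neg_mul (k := 4 * (x 0 * z 0)) (T := T) (by positivity)
    (fun t ht => (((h.hasDerivAt_x t (hT t ht).2).sub (h.hasDerivAt_z t (hT t ht).2)).pow 2))
    (fun t ht => ?_) fun t _ => sq_nonneg _
  obtain ⟨hyt, ht₀⟩ := hT t ht
  have hw : x 0 * z 0 ≤ x t * z t := h.monotoneOn_mul self_mem_Ici ht₀ ht₀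
  have hxyz := mul_nonneg (mul_nonneg (h.nonneg_x t) (h.nonneg_y t)) (h.nonneg_z t)
  have hσ : 8 * y t / 3 - 4 * x t * z t - 3 * x t * y t * z t / 16 ≤ -2 * (x 0 * z 0) := by
    linarith
  rw [mul_rateA_sub_mul_rateC (h.sum_eq t ht₀)]
  simp only [Pi.sub_apply, Nat.cast_ofNat]
  nlinarith [mul_le_mul_of_nonneg_left hσ (sq_nonneg (x t - z t))]

lemma tendsto (h : IsSquaredNormalisedFlow x y z) (hxz₀ : 0 < x 0 * z 0) :
    Tendsto x atTop (𝓝 2) ∧ Tendsto y atTop (𝓝 0) ∧ Tendsto z atTop (𝓝 2) := by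
  have hy := h.tendsto_y (pos_of_mul_pos_left hxz₀ (h.nonneg_z 0))
  have hu := tendsto_zero_of_tendsto_sq (h.tendsto_sub_sq hxz₀)
  have hsum : ∀ᶠ t in atTop, x t + y t + z t = 4 := eventually_atTop.2 ⟨0, h.sum_eq⟩
  refine ⟨?_, hy, ?_⟩
  · have hlim := ((tendsto_const_nhds (x := (4:ℝ))).sub hy |>.add hu).div_const 2
    norm_num at hlim
    exact hlim.congr' (hsum.mono fun t ht => by linarith)
  · have hlim := ((tendsto_const_nhds (x := (4:ℝ))).sub hy |>.sub hu).div_const 2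
    norm_num at hlim
    exact hlim.congr' (hsum.mono fun t ht => by linarith)

end IsSquaredNormalisedFlow

/-- convergence of the norm-preserving normalised gauged bracket
Bach flow. If `(a,b,c) : [0,∞) → ℝ³` has `a > 0`, `c > 0`, constant squared norm
`a² + b² + c² = 4`, and solves
`(a,b,c)' = F(a,b,c) − (1/4)·⟨F(a,b,c),(a,b,c)⟩·(a,b,c)`,
then `(a(t), b(t), c(t)) → (√2, 0, √2)` as `t → ∞`. -/
theorem normalised_flow_convergence (a b c : ℝ → ℝ)
    (ha : ∀ t : ℝ, 0 ≤ t → 0 < a t) (hc : ∀ t : ℝ, 0 ≤ t → 0 < c t)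
    (hnorm : ∀ t : ℝ, 0 ≤ t → a t ^ 2 + b t ^ 2 + c t ^ 2 = 4)
    (hode : ∀ t : ℝ, 0 ≤ t →
      HasDerivAt a (Fa (a t) (b t) (c t) -
        (1/4) * (Fa (a t) (b t) (c t) * a t + Fb (a t) (b t) (c t) * b t +
          Fc (a t) (b t) (c t) * c t) * a t) t ∧
      HasDerivAt b (Fb (a t) (b t) (c t) -
        (1/4) * (Fa (a t) (b t) (c t) * a t + Fb (a t) (b t) (c t) * b t +
          Fc (a t) (b t) (c t) * c t) * b t) t ∧
      HasDerivAt c (Fc (a t) (b t) (c t) -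
        (1/4) * (Fa (a t) (b t) (c t) * a t + Fb (a t) (b t) (c t) * b t +
          Fc (a t) (b t) (c t) * c t) * c t) t) :
    Filter.Tendsto a Filter.atTop (nhds (Real.sqrt 2)) ∧
    Filter.Tendsto b Filter.atTop (nhds 0) ∧
    Filter.Tendsto c Filter.atTop (nhds (Real.sqrt 2)) := by
  have hflow : IsSquaredNormalisedFlow (fun t => a t ^ 2) (fun t => b t ^ 2) (fun t => c t ^ 2) :=
    { nonneg_x := fun t => sq_nonneg (a t)
      nonneg_y := fun t => sq_nonneg (b t)
      nonneg_z := fun t => sq_nonneg (c t)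
      sum_eq := hnorm
      hasDerivAt_x := fun t ht => (hode t ht).1.sq_of_two_mul_eq (two_mul_normalisedFa _ _ _)
      hasDerivAt_y := fun t ht => (hode t ht).2.1.sq_of_two_mul_eq (two_mul_normalisedFb _ _ _)
      hasDerivAt_z := fun t ht => (hode t ht).2.2.sq_of_two_mul_eq (two_mul_normalisedFc _ _ _) }
  obtain ⟨hx, hy, hz⟩ := hflow.tendsto (by have := ha 0 le_rfl; have := hc 0 le_rfl; positivity)
  have hpos : ∀ f : ℝ → ℝ, (∀ t, 0 ≤ t → 0 < f t) → ∀ᶠ t in atTop, 0 ≤ f t := fun f hf =>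
    (eventually_ge_atTop 0).mono fun t ht => (hf t ht).le
  exact ⟨tendsto_sqrt_of_tendsto_sq (hpos a ha) hx, tendsto_zero_of_tendsto_sq hy,
    tendsto_sqrt_of_tendsto_sq (hpos c hc) hz⟩
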